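/- For φ ∈ C_c^∞(0,∞), the quadratic form Q(φ) = ∫₀^∞ (φ'(y)² + (y²/16 - 3/4)·φ(y)²) dy is nonnegative. -/

import Mathlib

open Real MeasureTheory

theorem quadratic_form_nonneg
    (φ : ℝ → ℝ) (hsmooth : ContDiff ℝ (⊤ : ℕ∞) φ) (hsupp : HasCompactSupport φ)
    (hsupp' : tsupport φ ⊆ Set.Ioi (0:ℝ)) :
    0 ≤ ∫ y in Set.Ioi (0:ℝ), ((deriv φ y) ^ 2 + (y ^ 2 / 16 - 3 / 4) * (φ y) ^ 2) := by
  -- get a > 0 below the support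
  obtain ⟨a, ha0, haφ⟩ : ∃ a : ℝ, 0 < a ∧ ∀ y < a, φ y = 0 := by
    rcases (tsupport φ).eq_empty_or_nonempty with h | h
    · exact ⟨1, one_pos, fun y _ => image_eq_zero_of_notMem_tsupport (by simp [h])⟩
    · obtain ⟨a, ha, hle⟩ := hsupp.exists_isLeast h
      exact ⟨a, hsupp' ha, fun y hy =>
        image_eq_zero_of_notMem_tsupport (fun hm => absurd (hle hm) (not_le.2 hy))⟩
  have hφcont : Continuous φ := hsmooth.continuous
  have hφ' : Continuous (deriv φ) := hsmooth.continuous_deriv (by simp)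
  have hφdiff : Differentiable ℝ φ := hsmooth.differentiable (by simp)
  -- φ and deriv φ vanish below a
  have hderiv0 : ∀ y < a, deriv φ y = 0 := by
    intro y hy
    have hev : φ =ᶠ[nhds y] (fun _ => 0) :=
      Filter.eventuallyEq_of_mem (Iio_mem_nhds hy) (fun z hz => haφ z hz)
    rw [hev.deriv_eq]; exact deriv_const y 0
  set w : ℝ → ℝ := fun y => 1 / y - y / 4 with hw
  set F : ℝ → ℝ := fun y => deriv φ y - w y * φ y with hF
  set g : ℝ → ℝ := fun y => w y * φ y ^ 2 with hg
  set h : ℝ → ℝ := fun y => (deriv φ y) ^ 2 + (y ^ 2 / 16 - 3 / 4) * (φ y) ^ 2 with hh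
  have hg0 : ∀ y < a, g y = 0 := fun y hy => by simp [hg, haφ y hy]
  -- g is differentiable everywhere and h = F^2 + deriv g
  have key : ∀ y : ℝ, HasDerivAt g (h y - F y ^ 2) y := by
    intro y
    rcases lt_or_ge y a with hy | hy
    · have : h y - F y ^ 2 = 0 := by simp [hh, hF, haφ y hy, hderiv0 y hy]
      rw [this]
      have hev : g =ᶠ[nhds y] (fun _ => 0) :=
        Filter.eventuallyEq_of_mem (Iio_mem_nhds hy) (fun z hz => hg0 z hz)
      exact (hasDerivAt_const y (0:ℝ)).congr_of_eventuallyEq hev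
    · have hy0 : y ≠ 0 := ne_of_gt (lt_of_lt_of_le ha0 hy)
      have hw' : HasDerivAt w (-(1 / y ^ 2) - 1 / 4) y := by
        have h1 : HasDerivAt (fun z : ℝ => 1 / z) (-(1 / y ^ 2)) y := by
          simpa using (hasDerivAt_inv hy0)
        have h2 : HasDerivAt (fun z : ℝ => z / 4) (1 / 4) y := by
          simpa using (hasDerivAt_id y).div_const 4
        show HasDerivAt (fun z : ℝ => 1 / z - z / 4) (-(1 / y ^ 2) - 1 / 4) y
        exact h1.sub h2
      have hφ2 : HasDerivAt (fun z => φ z ^ 2) (2 * φ y * deriv φ y) y := by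
        have := (hφdiff y).hasDerivAt.pow 2; simp at this; exact this
      have : HasDerivAt g _ y := hw'.mul hφ2
      convert this using 1
      simp only [hh, hF, hw]
      field_simp
      ring
  have hgdiff : Differentiable ℝ g := fun y => (key y).differentiableAt
  have hgderiv : ∀ y, deriv g y = h y - F y ^ 2 := fun y => (key y).deriv
  -- support facts
  have hFsupp : ∀ y ∉ tsupport φ, F y = 0 := by
    intro y hy
    have h1 : φ y = 0 := image_eq_zero_of_notMem_tsupport hy
    have h2 : deriv φ y = 0 := by
      have hev : φ =ᶠ[nhds y] (fun _ => 0) :=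
        Filter.eventuallyEq_of_mem ((isOpen_compl_iff.2 (isClosed_tsupport φ)).mem_nhds hy)
          (fun z hz => image_eq_zero_of_notMem_tsupport hz)
      rw [hev.deriv_eq]; exact deriv_const y 0
    simp [hF, h1, h2]
  have hFc : HasCompactSupport F :=
    HasCompactSupport.of_support_subset_isCompact hsupp
      (Function.support_subset_iff'.2 hFsupp)
  have hhc : HasCompactSupport h := by
    apply HasCompactSupport.of_support_subset_isCompact hsupp
    apply Function.support_subset_iff'.2
    intro y hy
    have h1 : φ y = 0 := image_eq_zero_of_notMem_tsupport hy
    have h2 : deriv φ y = 0 := by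
      have := hFsupp y hy
      simp only [hF, h1, mul_zero, sub_zero] at this
      exact this
    simp [hh, h1, h2]
  -- continuity of F on all of ℝ
  have hFcont : Continuous F := by
    rw [continuous_iff_continuousAt]
    intro y
    rcases lt_or_ge y a with hy | hy
    · have hev : F =ᶠ[nhds y] deriv φ := by
        apply Filter.eventuallyEq_of_mem (Iio_mem_nhds hy)
        intro z hz; simp [hF, haφ z hz]
      exact ((hφ'.continuousAt).congr hev.symm)
    · have hy0 : y ≠ 0 := ne_of_gt (lt_of_lt_of_le ha0 hy)
      apply ContinuousAt.sub hφ'.continuousAt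
      exact (((continuousAt_const.div continuousAt_id hy0).sub
        (continuousAt_id.div_const 4)).mul hφcont.continuousAt)
  have hhcont : Continuous h := by
    apply (hφ'.pow 2).add
    exact (((continuous_pow 2).div_const 16).sub continuous_const).mul (hφcont.pow 2)
  -- integrability
  have hF2int : Integrable (fun y => F y ^ 2) :=
    ((hFcont.pow 2).integrable_of_hasCompactSupport
      (HasCompactSupport.of_support_subset_isCompact hFc
        (Function.support_subset_iff'.2 (fun y hy => by
          simp [image_eq_zero_of_notMem_tsupport hy]))))
  have hhint : Integrable h := hhcont.integrable_of_hasCompactSupport hhc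
  have hgderivint : Integrable (deriv g) := by
    have : deriv g = fun y => h y - F y ^ 2 := funext hgderiv
    rw [this]; exact hhint.sub hF2int
  -- ∫ deriv g = 0
  have hgc : HasCompactSupport g := by
    apply HasCompactSupport.of_support_subset_isCompact hsupp
    apply Function.support_subset_iff'.2
    intro y hy; simp [hg, image_eq_zero_of_notMem_tsupport hy]
  obtain ⟨R, hR⟩ := hgc.isCompact.isBounded.subset_closedBall 0
  have hRpos : 0 ≤ R ∨ tsupport g = ∅ := by
    rcases (tsupport g).eq_empty_or_nonempty with h | ⟨x, hx⟩
    · exact Or.inr h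
    · have := hR hx
      simp only [Metric.mem_closedBall, Real.dist_eq] at this
      exact Or.inl (le_trans (abs_nonneg _) this)
  have hderivg0 : ∀ y ∉ tsupport g, deriv g y = 0 := by
    intro y hy
    have hev : g =ᶠ[nhds y] (fun _ => 0) :=
      Filter.eventuallyEq_of_mem ((isOpen_compl_iff.2 (isClosed_tsupport g)).mem_nhds hy)
        (fun z hz => image_eq_zero_of_notMem_tsupport hz)
    rw [hev.deriv_eq]; exact deriv_const y 0
  have hintderivg : ∫ y, deriv g y = 0 := by
    rcases hRpos with hR0 | hempty
    · have hRR : -(R+1) ≤ (R+1) := by linarith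
      have hsub : ∀ y ∉ Set.Ioc (-(R+1)) (R+1), deriv g y = 0 := by
        intro y hy
        apply hderivg0
        intro hmem
        apply hy
        have := hR hmem
        simp only [Metric.mem_closedBall, Real.dist_eq] at this
        have := abs_le.1 this
        constructor <;> linarith [this.1, this.2]
      have h1 : ∫ y, deriv g y = ∫ y in Set.Ioc (-(R+1)) (R+1), deriv g y :=
        (setIntegral_eq_integral_of_forall_compl_eq_zero hsub).symm
      rw [h1, ← intervalIntegral.integral_of_le hRR]
      rw [intervalIntegral.integral_deriv_eq_sub (fun x _ => hgdiff x)]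
      · have e1 : g (R+1) = 0 := image_eq_zero_of_notMem_tsupport (fun hm => by
          have := hR hm; simp only [Metric.mem_closedBall, Real.dist_eq] at this
          rw [abs_of_nonneg (by linarith)] at this; linarith)
        have e2 : g (-(R+1)) = 0 := image_eq_zero_of_notMem_tsupport (fun hm => by
          have := hR hm; simp only [Metric.mem_closedBall, Real.dist_eq] at this
          rw [abs_of_nonpos (by linarith)] at this; linarith)
        rw [e1, e2, sub_zero]
      · rw [funext hgderiv]
        exact (hhcont.sub (hFcont.pow 2)).continuousOn.intervalIntegrable
    · have : ∀ y, deriv g y = 0 := fun y => hderivg0 y (by simp [hempty])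
      simp [this]
  -- h vanishes on (Ioi 0)ᶜ
  have hcompl : ∀ y ∉ Set.Ioi (0:ℝ), h y = 0 := by
    intro y hy
    simp only [Set.mem_Ioi, not_lt] at hy
    have hya : y < a := lt_of_le_of_lt hy ha0
    simp [hh, haφ y hya, hderiv0 y hya]
  calc (0:ℝ) ≤ ∫ y, F y ^ 2 := integral_nonneg (fun y => sq_nonneg _)
    _ = (∫ y, F y ^ 2) + ∫ y, deriv g y := by rw [hintderivg, add_zero]
    _ = ∫ y, (F y ^ 2 + deriv g y) := (integral_add hF2int hgderivint).symm
    _ = ∫ y, h y := by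
        congr 1; funext y; rw [hgderiv y]; ring
    _ = ∫ y in Set.Ioi (0:ℝ), h y :=
        (setIntegral_eq_integral_of_forall_compl_eq_zero hcompl).symm
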